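/- arXiv:2311.15186 — 2 statements merged into one kernel-verified Lean document; each statement's English description precedes it below -/
import Mathlib

section
/- Let ρ : (0,1] → ℝ be a nonnegative measurable function such that r ↦ r³ρ(r) is integrable on (0,1) and satisfies the second-moment normalization ∫₀¹ r³ρ(r) dr = 2/π. Then for every δ > 0 and every k ∈ ℤ² \ {0}, the 2D nonlocal Fourier symbol satisfies the lower bound λ_δ(k) ≥ |k|² − (δ² |k|⁴)/16. -/
/-!
Since `1 - cos x ≥ x²/2 - x⁴/24` and `r ≤ 1`, the radial integral at frequency `c` is at least
`(c²/2 - c⁴/24) ∫₀¹ r³ρ = (2/π)(c²/2 - c⁴/24)`. Integrating over `θ` with `c = δ|k| cos θ`, using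
`∫₀^{π/2} cos² = π/4` and `∫₀^{π/2} cos⁴ = 3π/16`, gives exactly `|k|² - δ²|k|⁴/16`.
-/

open Real MeasureTheory

/-- Euclidean norm of a nonzero integer vector `k ∈ ℤ²`. -/
noncomputable def knorm2 (k : ℤ × ℤ) : ℝ :=
  Real.sqrt ((k.1 : ℝ) ^ 2 + (k.2 : ℝ) ^ 2)

/-- The 2D Fourier symbol of the nonlocal diffusion operator:
`λ_δ(k) = (4/δ²) ∫₀^{π/2} ∫₀¹ r ρ(r) (1 − cos(r δ |k| cos θ)) dr dθ`. -/
noncomputable def lambdaDelta2 (ρ : ℝ → ℝ) (δ κ : ℝ) : ℝ :=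
  (4 / δ ^ 2) * ∫ θ in (0:ℝ)..(π / 2), ∫ r in (0:ℝ)..1,
    r * ρ r * (1 - Real.cos (r * δ * κ * Real.cos θ))

open Set Filter Topology

-- Via `1 - cos x = 2 sin² (x/2)` and `sin y ≥ y - y³/6`; for `x² ≥ 12` the right side is `≥ 1`.
theorem Real.cos_le_one_sub_sq_div_two_add_pow_four_div (x : ℝ) :
    cos x ≤ 1 - x ^ 2 / 2 + x ^ 4 / 24 := by
  rw [← cos_abs, ← sq_abs x, ← Even.pow_abs (by decide : Even 4) x]
  set y := |x|
  have hy : 0 ≤ y := abs_nonneg x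
  rcases le_or_gt 12 (y ^ 2) with hbig | hsmall
  · nlinarith [cos_le_one y]
  · have hsin : y / 2 - (y / 2) ^ 3 / 6 ≤ sin (y / 2) := sin_ge_sub_cube (by positivity)
    have hcubic : 0 ≤ y / 2 - (y / 2) ^ 3 / 6 := by nlinarith
    have hhalf : cos y = 1 - 2 * sin (y / 2) ^ 2 := by
      have := cos_sq (y / 2)
      rw [mul_div_cancel₀ y two_ne_zero] at this
      nlinarith [sin_sq_add_cos_sq (y / 2)]
    nlinarith [mul_le_mul hsin hsin hcubic (hcubic.trans hsin), pow_nonneg hy 6]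

/-- The radial part of `lambdaDelta2` at the frequency `c = δ |k| cos θ`. -/
noncomputable def radialSymbol (ρ : ℝ → ℝ) (c : ℝ) : ℝ :=
  ∫ r in (0:ℝ)..1, r * ρ r * (1 - cos (r * c))

theorem lambdaDelta2_eq_integral_radialSymbol (ρ : ℝ → ℝ) (δ κ : ℝ) :
    lambdaDelta2 ρ δ κ = 4 / δ ^ 2 * ∫ θ in (0:ℝ)..(π / 2), radialSymbol ρ (δ * κ * cos θ) := by
  simp only [lambdaDelta2, radialSymbol, mul_assoc]

section radialSymbol

variable {ρ : ℝ → ℝ} (hnonneg : ∀ r ∈ Ioc (0:ℝ) 1, 0 ≤ ρ r)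
include hnonneg

theorem norm_radialIntegrand_le (c : ℝ) {r : ℝ} (hr : r ∈ Ioc (0:ℝ) 1) :
    ‖r * ρ r * (1 - cos (r * c))‖ ≤ c ^ 2 / 2 * (r ^ 3 * ρ r) := by
  have hrρ : 0 ≤ r * ρ r := mul_nonneg hr.1.le (hnonneg r hr)
  rw [norm_of_nonneg (mul_nonneg hrρ (by linarith [cos_le_one (r * c)]))]
  calc r * ρ r * (1 - cos (r * c)) ≤ r * ρ r * ((r * c) ^ 2 / 2) := by
        gcongr; linarith [one_sub_sq_div_two_le_cos (x := r * c)]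
    _ = c ^ 2 / 2 * (r ^ 3 * ρ r) := by ring

variable (hmeas : Measurable ρ) (hint : IntervalIntegrable (fun r => r ^ 3 * ρ r) volume 0 1)
include hmeas hint

theorem intervalIntegrable_radialIntegrand (c : ℝ) :
    IntervalIntegrable (fun r => r * ρ r * (1 - cos (r * c))) volume 0 1 := by
  refine (hint.const_mul (c ^ 2 / 2)).mono_fun' (by fun_prop) ?_
  rw [uIoc_of_le zero_le_one, EventuallyLE, ae_restrict_iff' measurableSet_Ioc]
  exact Eventually.of_forall fun r hr => norm_radialIntegrand_le hnonneg c hr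

theorem continuous_radialSymbol : Continuous (radialSymbol ρ) := by
  refine continuous_iff_continuousAt.2 fun c₀ => ?_
  have hnear : ∀ᶠ c in 𝓝 c₀, |c| < |c₀| + 1 :=
    continuous_abs.continuousAt.eventually_lt continuousAt_const (lt_add_one _)
  refine intervalIntegral.continuousAt_of_dominated_interval
    (bound := fun r => (|c₀| + 1) ^ 2 / 2 * (r ^ 3 * ρ r))
    (Eventually.of_forall fun c => by fun_prop) ?_ (hint.const_mul _)
    (Eventually.of_forall fun r _ => by fun_prop)
  filter_upwards [hnear] with c hc
  refine Eventually.of_forall fun r hr => ?_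
  rw [uIoc_of_le zero_le_one] at hr
  have hr3 : 0 ≤ r ^ 3 * ρ r := mul_nonneg (pow_nonneg hr.1.le 3) (hnonneg r hr)
  have hsq : c ^ 2 ≤ (|c₀| + 1) ^ 2 :=
    sq_le_sq' (by linarith [neg_abs_le c]) (by linarith [le_abs_self c])
  exact (norm_radialIntegrand_le hnonneg c hr).trans (by gcongr)

theorem moment_mul_le_radialSymbol (c : ℝ) :
    (c ^ 2 / 2 - c ^ 4 / 24) * ∫ r in (0:ℝ)..1, r ^ 3 * ρ r ≤ radialSymbol ρ c := by
  rw [← intervalIntegral.integral_const_mul]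
  refine intervalIntegral.integral_mono_on_of_le_Ioo zero_le_one (hint.const_mul _)
    (intervalIntegrable_radialIntegrand hnonneg hmeas hint c) fun r hr => ?_
  have hrρ : 0 ≤ r * ρ r := mul_nonneg hr.1.le (hnonneg r (Ioo_subset_Ioc_self hr))
  have hr2 : 0 ≤ 1 - r ^ 2 := by nlinarith [hr.1, hr.2]
  calc (c ^ 2 / 2 - c ^ 4 / 24) * (r ^ 3 * ρ r)
      ≤ r * ρ r * ((r * c) ^ 2 / 2 - (r * c) ^ 4 / 24) := by
        nlinarith [mul_nonneg (mul_nonneg hrρ (sq_nonneg r))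
          (mul_nonneg hr2 (pow_nonneg (sq_nonneg c) 2))]
    _ ≤ r * ρ r * (1 - cos (r * c)) := by
        refine mul_le_mul_of_nonneg_left ?_ hrρ
        linarith [cos_le_one_sub_sq_div_two_add_pow_four_div (r * c)]

end radialSymbol

theorem integral_cos_sq_zero_pi_div_two : ∫ θ in (0:ℝ)..(π / 2), cos θ ^ 2 = π / 4 := by
  rw [integral_cos_sq]
  simp only [cos_pi_div_two, sin_pi_div_two, cos_zero, sin_zero]
  ring

theorem integral_cos_pow_four_zero_pi_div_two :
    ∫ θ in (0:ℝ)..(π / 2), cos θ ^ 4 = 3 * π / 16 := by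
  rw [integral_cos_pow (n := 2), integral_cos_sq_zero_pi_div_two]
  simp only [cos_pi_div_two, sin_pi_div_two, cos_zero, sin_zero]
  push_cast
  ring

theorem lambdaDelta2_lower_bound_general (ρ : ℝ → ℝ) (hmeas : Measurable ρ)
    (hnonneg : ∀ r ∈ Set.Ioc (0:ℝ) 1, 0 ≤ ρ r)
    (hint : IntervalIntegrable (fun r => r ^ 3 * ρ r) volume 0 1)
    (hmoment : (∫ r in (0:ℝ)..1, r ^ 3 * ρ r) = 2 / π)
    (δ : ℝ) (hδ : 0 < δ) (k : ℤ × ℤ) :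
    (knorm2 k) ^ 2 - δ ^ 2 * (knorm2 k) ^ 4 / 16 ≤ lambdaDelta2 ρ δ (knorm2 k) := by
  set a := δ * knorm2 k
  have hlower : ∫ θ in (0:ℝ)..(π / 2), 2 / π * ((a * cos θ) ^ 2 / 2 - (a * cos θ) ^ 4 / 24)
      ≤ ∫ θ in (0:ℝ)..(π / 2), radialSymbol ρ (a * cos θ) := by
    refine intervalIntegral.integral_mono_on (by positivity)
      (by apply Continuous.intervalIntegrable; fun_prop)
      (((continuous_radialSymbol hnonneg hmeas hint).comp (by fun_prop)).intervalIntegrable _ _)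
      fun θ _ => ?_
    rw [mul_comm, ← hmoment]
    exact moment_mul_le_radialSymbol hnonneg hmeas hint _
  have hvalue : ∫ θ in (0:ℝ)..(π / 2), 2 / π * ((a * cos θ) ^ 2 / 2 - (a * cos θ) ^ 4 / 24)
      = a ^ 2 / 4 - a ^ 4 / 64 := by
    simp only [mul_pow, mul_sub, ← mul_div_assoc]
    rw [intervalIntegral.integral_sub (by apply Continuous.intervalIntegrable; fun_prop)
      (by apply Continuous.intervalIntegrable; fun_prop)]
    simp only [intervalIntegral.integral_div, intervalIntegral.integral_const_mul,
      integral_cos_sq_zero_pi_div_two, integral_cos_pow_four_zero_pi_div_two]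
    field_simp
    ring
  rw [lambdaDelta2_eq_integral_radialSymbol]
  calc knorm2 k ^ 2 - δ ^ 2 * knorm2 k ^ 4 / 16 = 4 / δ ^ 2 * (a ^ 2 / 4 - a ^ 4 / 64) := by
        field_simp; ring
    _ ≤ _ := by rw [← hvalue]; gcongr

theorem lambdaDelta2_lower_bound (ρ : ℝ → ℝ) (hmeas : Measurable ρ)
    (hnonneg : ∀ r ∈ Set.Ioc (0:ℝ) 1, 0 ≤ ρ r)
    (hint : IntervalIntegrable (fun r => r ^ 3 * ρ r) volume 0 1)
    (hmoment : (∫ r in (0:ℝ)..1, r ^ 3 * ρ r) = 2 / π)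
    (δ : ℝ) (hδ : 0 < δ) (k : ℤ × ℤ) (hk : k ≠ 0) :
    (knorm2 k) ^ 2 - δ ^ 2 * (knorm2 k) ^ 4 / 16 ≤ lambdaDelta2 ρ δ (knorm2 k) :=
  lambdaDelta2_lower_bound_general ρ hmeas hnonneg hint hmoment δ hδ k
end

section
/- Let ρ : (0,1] → ℝ be a nonnegative measurable function such that r ↦ r³ρ(r) is integrable on (0,1) and r ↦ r ρ(r) is integrable on (0,1). Suppose there is r* ∈ (0,1] such that the map r ↦ r ρ(r) is nondecreasing on (0, r*]. Then for every δ > 0 and every k ∈ ℤ² \ {0} with r* δ|k| ≥ π, one has δ² λ_δ(k) ≥ π · min{ ∫_{r*/√2}^{r*} r ρ(r) dr , ∫₀^{(3/7)r*} r ρ(r) dr }. -/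
open Real MeasureTheory

/-!
Write `g r = r * ρ r` and `ω = δ |k| cos θ`. For `θ ∈ [0, π/4]` we have `√2 r* ω ≥ π`, and the
inner integral `∫₀¹ g (1 - cos (r ω))` dominates the minimum. If `r* ω ≤ 3π/2`, then
`cos (r ω) ≤ 0` on `[r*/√2, r*]`. Otherwise `1 + sin (r* ω) ≤ (4/7) r* ω`, which says exactly that
`h = (1 - cos (r ω)) - 1_{r ≤ 3r*/7}` has nonnegative tail integrals `∫ₜ^{r*} h`; a second mean
value argument for the nondecreasing `g ≥ 0` on `[0, r*]` then gives
`∫₀^{3r*/7} g ≤ ∫₀^{r*} g (1 - cos (r ω))`. Integrating over `θ ∈ [0, π/4]` only, and using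
`δ² λ_δ = 4 ∫₀^{π/2} …`, yields the factor `4 · π/4 = π`.
-/

open Set Filter Topology intervalIntegral

theorem neg_mul_le_sum_range_mul_sub {φ H : ℕ → ℝ} {n : ℕ} (hφ0 : 0 ≤ φ 0)
    (hφ : ∀ m < n, φ m ≤ φ (m + 1)) (hH : ∀ m ≤ n, 0 ≤ H m) :
    -(φ n * H n) ≤ ∑ j ∈ Finset.range n, φ (j + 1) * (H j - H (j + 1)) := by
  induction n with
  | zero => simpa using mul_nonneg hφ0 (hH 0 le_rfl)
  | succ m ih =>
    rw [Finset.sum_range_succ]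
    have := ih (fun p hp => hφ p (by omega)) (fun p hp => hH p (by omega))
    nlinarith [mul_nonneg (sub_nonneg.2 (hφ m (by omega))) (hH m (by omega))]

theorem MonotoneOn.integrableOn_mul {g h : ℝ → ℝ} {a b B : ℝ} (hg : MonotoneOn g (Icc a b))
    (hh : IntegrableOn h (Icc a b)) (hB : ∀ r ∈ Icc a b, |h r| ≤ B) :
    IntegrableOn (fun r => g r * h r) (Icc a b) :=
  (hg.integrableOn_isCompact isCompact_Icc).mul_bdd hh.aestronglyMeasurable
    ((ae_restrict_iff' measurableSet_Icc).2 (.of_forall hB))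

theorem sub_le_integral_mul_of_monotoneOn {g h : ℝ → ℝ} {u v B : ℝ} (huv : u ≤ v)
    (hg : MonotoneOn g (Icc u v)) (hB : ∀ r ∈ Icc u v, |h r| ≤ B)
    (hh : IntervalIntegrable h volume u v)
    (hgh : IntervalIntegrable (fun r => g r * h r) volume u v) :
    g v * (∫ r in u..v, h r) - B * (v - u) * (g v - g u) ≤ ∫ r in u..v, g r * h r := by
  have hsplit : (∫ r in u..v, g r * h r) - g v * ∫ r in u..v, h r
      = ∫ r in u..v, (g r - g v) * h r := by
    rw [← intervalIntegral.integral_const_mul, ← integral_sub hgh (hh.const_mul _)]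
    congr 1; funext r; ring
  have hbound : ‖∫ r in u..v, (g r - g v) * h r‖ ≤ (g v - g u) * B * |v - u| := by
    refine norm_integral_le_of_norm_le_const fun r hr => ?_
    rw [uIoc_of_le huv] at hr
    have hr' : r ∈ Icc u v := Ioc_subset_Icc_self hr
    have hur : g u ≤ g r := hg ⟨le_rfl, huv⟩ hr' hr.1.le
    have hrv : g r ≤ g v := hg hr' ⟨huv, le_rfl⟩ hr.2
    have hvu : |g r - g v| ≤ g v - g u := by
      rw [abs_le]; constructor <;> linarith
    rw [norm_mul, Real.norm_eq_abs]
    exact mul_le_mul hvu (hB r hr') (abs_nonneg _) ((abs_nonneg _).trans hvu)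
  rw [abs_of_nonneg (sub_nonneg.2 huv), ← hsplit, Real.norm_eq_abs] at hbound
  linarith [(abs_le.1 hbound).1]

theorem MeasureTheory.IntegrableOn.intervalIntegrable_of_mem_Icc {f : ℝ → ℝ} {a b c d : ℝ}
    (hf : IntegrableOn f (Icc a b)) (hc : c ∈ Icc a b) (hd : d ∈ Icc a b) :
    IntervalIntegrable f volume c d :=
  (hf.mono_set (uIcc_subset_Icc hc hd)).intervalIntegrable

/-- Freezing `g` at the right endpoints of `n` equal pieces gives a sum that is nonnegative by
Abel summation, since the tails `∫ t..b, h` are nonnegative and `g` increases. -/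
theorem neg_div_le_integral_mul_of_monotoneOn {g h : ℝ → ℝ} {a b B : ℝ} (hab : a ≤ b)
    (hg : MonotoneOn g (Icc a b)) (hga : 0 ≤ g a) (hB : ∀ r ∈ Icc a b, |h r| ≤ B)
    (hh : IntegrableOn h (Icc a b)) (hH : ∀ t ∈ Icc a b, 0 ≤ ∫ r in t..b, h r)
    {n : ℕ} (hn : 0 < n) :
    -(B * (b - a) * (g b - g a) / n) ≤ ∫ r in a..b, g r * h r := by
  have hgh := hg.integrableOn_mul hh hB
  set Δ := (b - a) / n with hΔ
  have hΔ0 : 0 ≤ Δ := div_nonneg (sub_nonneg.2 hab) (Nat.cast_nonneg n)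
  set x : ℕ → ℝ := fun j => a + j * Δ with hx
  have hx0 : x 0 = a := by simp [hx]
  have hxn : x n = b := by simp only [hx, hΔ]; field_simp [(Nat.cast_pos.2 hn).ne']; ring
  have hx_step : ∀ j, x (j + 1) - x j = Δ := fun j => by simp only [hx]; push_cast; ring
  have hx_mono : Monotone x := monotone_nat_of_le_succ fun j => by linarith [hx_step j]
  have hx_mem : ∀ j ≤ n, x j ∈ Icc a b := fun j hj =>
    ⟨hx0 ▸ hx_mono (Nat.zero_le j), hxn ▸ hx_mono hj⟩
  set H : ℝ → ℝ := fun t => ∫ r in t..b, h r with hH_def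
  have piece : ∀ j < n, g (x (j + 1)) * (H (x j) - H (x (j + 1)))
      - B * Δ * (g (x (j + 1)) - g (x j)) ≤ ∫ r in x j..x (j + 1), g r * h r := by
    intro j hj
    have hj0 := hx_mem j hj.le
    have hj1 := hx_mem (j + 1) hj
    have hHdiff : H (x j) - H (x (j + 1)) = ∫ r in x j..x (j + 1), h r := by
      have := integral_add_adjacent_intervals (hh.intervalIntegrable_of_mem_Icc hj0 hj1)
        (hh.intervalIntegrable_of_mem_Icc hj1 ⟨hab, le_rfl⟩)
      simp only [hH_def]
      linarith
    rw [hHdiff, ← hx_step j]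
    exact sub_le_integral_mul_of_monotoneOn (hx_mono j.le_succ)
      (hg.mono (Icc_subset_Icc hj0.1 hj1.2)) (fun r hr => hB r ⟨hj0.1.trans hr.1, hr.2.trans hj1.2⟩)
      (hh.intervalIntegrable_of_mem_Icc hj0 hj1) (hgh.intervalIntegrable_of_mem_Icc hj0 hj1)
  have hsum := Finset.sum_le_sum fun j hj => piece j (Finset.mem_range.1 hj)
  rw [sum_integral_adjacent_intervals fun j hj =>
      hgh.intervalIntegrable_of_mem_Icc (hx_mem j hj.le) (hx_mem (j + 1) hj),
    Finset.sum_sub_distrib, ← Finset.mul_sum, Finset.sum_range_sub (fun j => g (x j))] at hsum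
  have habel := neg_mul_le_sum_range_mul_sub (φ := fun j => g (x j)) (H := fun j => H (x j))
    (n := n) (by simpa [hx0] using hga)
    (fun m hm => hg (hx_mem m hm.le) (hx_mem (m + 1) hm) (hx_mono m.le_succ))
    (fun m hm => hH (x m) (hx_mem m hm))
  simp only [hx0, hxn, hH_def, integral_same] at hsum habel
  rw [hΔ, mul_div_assoc', div_mul_eq_mul_div] at hsum
  linarith

theorem integral_mul_nonneg_of_monotoneOn {g h : ℝ → ℝ} {a b B : ℝ} (hab : a ≤ b)
    (hg : MonotoneOn g (Icc a b)) (hga : 0 ≤ g a) (hB : ∀ r ∈ Icc a b, |h r| ≤ B)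
    (hh : IntegrableOn h (Icc a b)) (hH : ∀ t ∈ Icc a b, 0 ≤ ∫ r in t..b, h r) :
    0 ≤ ∫ r in a..b, g r * h r := by
  have hlim : Tendsto (fun n : ℕ => -(B * (b - a) * (g b - g a) / n)) atTop (𝓝 0) := by
    simpa using (tendsto_const_div_atTop_nhds_zero_nat (B * (b - a) * (g b - g a))).neg
  exact le_of_tendsto hlim (eventually_atTop.2
    ⟨1, fun n hn => neg_div_le_integral_mul_of_monotoneOn hab hg hga hB hh hH hn⟩)

theorem integral_indicator_setOf_le_one {b c t : ℝ} (hc : c ≤ b) (ht : t ≤ b) :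
    ∫ r in t..b, {r : ℝ | r ≤ c}.indicator 1 r = max (c - t) 0 := by
  rcases le_total t c with htc | hct
  · rw [integral_indicator ⟨htc, hc⟩, max_eq_left (sub_nonneg.2 htc)]
    simp
  · rw [max_eq_right (sub_nonpos.2 hct)]
    refine integral_zero_ae (.of_forall fun r hr => ?_)
    rw [uIoc_of_le ht] at hr
    simp [not_le.2 (hct.trans_lt hr.1)]

theorem integral_le_integral_mul_of_monotoneOn {g f : ℝ → ℝ} {a b c B : ℝ} (hc : c ∈ Icc a b)
    (hg : MonotoneOn g (Icc a b)) (hga : 0 ≤ g a) (hB : ∀ r ∈ Icc a b, |f r| ≤ B)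
    (hf : IntegrableOn f (Icc a b)) (hleft : ∀ t ∈ Icc a c, c - t ≤ ∫ r in t..b, f r)
    (hright : ∀ t ∈ Icc c b, 0 ≤ ∫ r in t..b, f r) :
    ∫ r in a..c, g r ≤ ∫ r in a..b, g r * f r := by
  have hab : a ≤ b := hc.1.trans hc.2
  have ha : a ∈ Icc a b := ⟨le_rfl, hab⟩
  have hb : b ∈ Icc a b := ⟨hab, le_rfl⟩
  set χ : ℝ → ℝ := {r | r ≤ c}.indicator 1 with hχ
  have hχ_le : ∀ r, |χ r| ≤ 1 := fun r => by
    simp only [hχ, Set.indicator_apply]; split_ifs <;> norm_num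
  have hχ_int : IntegrableOn χ (Icc a b) :=
    continuous_const.integrableOn_Icc.indicator measurableSet_Iic
  have hgχ : ∫ r in a..b, g r * χ r = ∫ r in a..c, g r := by
    rw [← integral_indicator (f := g) hc]
    congr 1; funext r
    simp only [hχ, Set.indicator_apply]; split_ifs <;> simp
  have htail : ∀ t ∈ Icc a b, 0 ≤ ∫ r in t..b, f r - χ r := by
    intro t ht
    rw [integral_sub (hf.intervalIntegrable_of_mem_Icc ht hb)
      (hχ_int.intervalIntegrable_of_mem_Icc ht hb), integral_indicator_setOf_le_one hc.2 ht.2]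
    rcases le_total t c with htc | hct
    · have := hleft t ⟨ht.1, htc⟩
      exact sub_nonneg.2 (max_le this ((sub_nonneg.2 htc).trans this))
    · rw [max_eq_right (sub_nonpos.2 hct), sub_zero]
      exact hright t ⟨hct, ht.2⟩
  have hnonneg := integral_mul_nonneg_of_monotoneOn (B := B + 1) hab hg hga
    (fun r hr => (abs_sub _ _).trans (add_le_add (hB r hr) (hχ_le r))) (hf.sub hχ_int) htail
  have hsplit : ∫ r in a..b, g r * (f r - χ r) =
      (∫ r in a..b, g r * f r) - ∫ r in a..b, g r * χ r := by
    simp_rw [mul_sub]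
    exact integral_sub ((hg.integrableOn_mul hf hB).intervalIntegrable_of_mem_Icc ha hb)
      ((hg.integrableOn_mul hχ_int fun r _ => hχ_le r).intervalIntegrable_of_mem_Icc ha hb)
  linarith

theorem integral_one_sub_cos_mul {ω : ℝ} (hω : ω ≠ 0) (t L : ℝ) :
    ∫ r in t..L, (1 - cos (r * ω)) = L - t - (sin (L * ω) - sin (t * ω)) / ω := by
  rw [integral_sub intervalIntegrable_const
      ((by fun_prop : Continuous fun r => cos (r * ω)).intervalIntegrable t L),
    intervalIntegral.integral_const, integral_comp_mul_right cos hω, integral_cos, smul_eq_mul,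
    smul_eq_mul, mul_one, inv_mul_eq_div]

theorem integral_le_integral_mul_one_sub_cos {g : ℝ → ℝ} {a c L ω : ℝ} (hc : c ∈ Icc a L)
    (hω : 0 < ω) (hg : MonotoneOn g (Icc a L)) (hga : 0 ≤ g a)
    (hcond : 1 + sin (L * ω) ≤ ω * (L - c)) :
    ∫ r in a..c, g r ≤ ∫ r in a..L, g r * (1 - cos (r * ω)) := by
  refine integral_le_integral_mul_of_monotoneOn hc hg hga (B := 2) (fun r _ => ?_)
    (by fun_prop : Continuous fun r => 1 - cos (r * ω)).integrableOn_Icc (fun t ht => ?_)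
    (fun t ht => integral_nonneg ht.2 fun r _ => sub_nonneg.2 (cos_le_one _))
  · rw [abs_le]; constructor <;> linarith [neg_one_le_cos (r * ω), cos_le_one (r * ω)]
  · have : (sin (L * ω) - sin (t * ω)) / ω ≤ L - c := by
      rw [div_le_iff₀ hω]; linarith [neg_one_le_sin (t * ω)]
    rw [integral_one_sub_cos_mul hω.ne']
    linarith

theorem one_add_sin_le {s : ℝ} (hs : 3 * π / 2 ≤ s) : 1 + sin s ≤ 4 / 7 * s := by
  rcases le_or_gt s (7 / 2) with hs' | hs'
  · have : sin s ≤ 0 := by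
      rw [← sin_sub_two_pi]
      exact sin_nonpos_of_nonpos_of_neg_pi_le (by linarith [pi_gt_three]) (by linarith [pi_pos])
    nlinarith [pi_gt_three]
  · linarith [sin_le_one s]

theorem min_integral_le_integral_mul_one_sub_cos {g : ℝ → ℝ} {rs ω : ℝ} (hrs : rs ∈ Ioc 0 1)
    (hg0 : ∀ r ∈ Icc 0 1, 0 ≤ g r) (hg : MonotoneOn g (Icc 0 rs))
    (hgi : IntervalIntegrable g volume 0 1) (hω : π ≤ √2 * (rs * ω)) :
    min (∫ r in rs / √2..rs, g r) (∫ r in 0..3 / 7 * rs, g r)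
      ≤ ∫ r in 0..1, g r * (1 - cos (r * ω)) := by
  obtain ⟨hrs0, hrs1⟩ := hrs
  have hGi : IntervalIntegrable (fun r => g r * (1 - cos (r * ω))) volume 0 1 :=
    hgi.mul_continuousOn (by fun_prop : Continuous fun r => 1 - cos (r * ω)).continuousOn
  have hG0 : ∀ r ∈ Icc (0 : ℝ) 1, 0 ≤ g r * (1 - cos (r * ω)) :=
    fun r hr => mul_nonneg (hg0 r hr) (sub_nonneg.2 (cos_le_one _))
  have le_integral_zero_one : ∀ u v : ℝ, 0 ≤ u → u ≤ v → v ≤ 1 →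
      ∫ r in u..v, g r * (1 - cos (r * ω)) ≤ ∫ r in 0..1, g r * (1 - cos (r * ω)) :=
    fun u v hu huv hv => integral_mono_interval hu huv hv
      ((ae_restrict_iff' measurableSet_Ioc).2
        (.of_forall fun r hr => hG0 r (Ioc_subset_Icc_self hr))) hGi
  have hsqrt2 : 1 ≤ √2 := by rw [one_le_sqrt]; norm_num
  have hω0 : 0 < ω :=
    pos_of_mul_pos_right (pos_of_mul_pos_right (pi_pos.trans_le hω) (by positivity)) hrs0.le
  rcases le_or_gt (rs * ω) (3 * π / 2) with hsmall | hlarge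
  · have hlo : rs / √2 ≤ rs := div_le_self hrs0.le hsqrt2
    have hsub : uIcc (rs / √2) rs ⊆ uIcc 0 1 := by
      rw [uIcc_of_le hlo, uIcc_of_le zero_le_one]; exact Icc_subset_Icc (by positivity) hrs1
    refine (min_le_left _ _).trans ((integral_mono_on hlo (hgi.mono_set hsub) (hGi.mono_set hsub)
      fun r hr => ?_).trans (le_integral_zero_one _ _ (by positivity) hlo hrs1))
    have : π / 2 ≤ r * ω := by
        calc π / 2 ≤ rs / √2 * ω := by
              rw [div_mul_eq_mul_div, le_div_iff₀ (by positivity)]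
              have h2 : √2 * √2 = 2 := mul_self_sqrt zero_le_two
              nlinarith [mul_le_mul_of_nonneg_left hω (sqrt_nonneg 2)]
          _ ≤ r * ω := mul_le_mul_of_nonneg_right hr.1 hω0.le
    have hcos : cos (r * ω) ≤ 0 := cos_nonpos_of_pi_div_two_le_of_le this
      (by nlinarith [mul_le_mul_of_nonneg_right hr.2 hω0.le])
    nlinarith [hg0 r ⟨(by positivity : (0:ℝ) ≤ rs / √2).trans hr.1, hr.2.trans hrs1⟩]
  · refine (min_le_right _ _).trans ((integral_le_integral_mul_one_sub_cos
      ⟨by positivity, by linarith⟩ hω0 hg (hg0 0 ⟨le_rfl, zero_le_one⟩) ?_).trans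
      (le_integral_zero_one 0 rs le_rfl hrs0.le hrs1))
    linarith [one_add_sin_le hlarge.le]

theorem mul_le_integral_of_le_of_nonneg {F : ℝ → ℝ} {a c b m : ℝ} (hac : a ≤ c) (hcb : c ≤ b)
    (hF : IntervalIntegrable F volume a b) (hm : ∀ θ ∈ Icc a c, m ≤ F θ)
    (h0 : ∀ θ ∈ Icc c b, 0 ≤ F θ) :
    (c - a) * m ≤ ∫ θ in a..b, F θ := by
  have hab : a ≤ b := hac.trans hcb
  have hsub : ∀ u v, u ∈ Icc a b → v ∈ Icc a b → IntervalIntegrable F volume u v :=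
    fun u v hu hv => hF.mono_set (by rw [uIcc_of_le hab]; exact uIcc_subset_Icc hu hv)
  rw [← integral_add_adjacent_intervals (hsub a c ⟨le_rfl, hab⟩ ⟨hac, hcb⟩)
    (hsub c b ⟨hac, hcb⟩ ⟨hab, le_rfl⟩)]
  have hleft : (c - a) * m ≤ ∫ θ in a..c, F θ := by
    simpa using integral_mono_on hac intervalIntegrable_const
      (hsub a c ⟨le_rfl, hab⟩ ⟨hac, hcb⟩) hm
  linarith [integral_nonneg (μ := volume) hcb h0]

theorem continuous_integral_mul_one_sub_cos {g : ℝ → ℝ} {a b : ℝ}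
    (hg : IntervalIntegrable g volume a b) :
    Continuous fun s => ∫ r in a..b, g r * (1 - cos (r * s)) := by
  refine continuous_of_dominated_interval (bound := fun r => ‖g r‖ * 2)
    (fun s => (intervalIntegrable_iff.1 hg).aestronglyMeasurable.mul
      (by fun_prop : Continuous fun r => 1 - cos (r * s)).aestronglyMeasurable)
    (fun s => .of_forall fun r _ => ?_) (hg.norm.mul_const 2)
    (.of_forall fun r _ => by fun_prop)
  rw [norm_mul]
  gcongr
  rw [Real.norm_eq_abs, abs_le]
  constructor <;> linarith [neg_one_le_cos (r * s), cos_le_one (r * s)]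

theorem MonotoneOn.Icc_of_Ioc {f : ℝ → ℝ} {a b : ℝ} (hab : a ≤ b)
    (hf : MonotoneOn f (Ioc a b)) (ha : ∀ x ∈ Ioc a b, f a ≤ f x) : MonotoneOn f (Icc a b) := by
  rw [← Ioc_insert_left hab]
  exact monotoneOn_insert_iff.2
    ⟨fun x hx hxa => absurd hxa (not_le.2 hx.1), fun x hx _ => ha x hx, hf⟩

theorem one_le_sqrt_two_mul_cos {θ : ℝ} (hθ : θ ∈ Icc 0 (π / 4)) : 1 ≤ √2 * cos θ := by
  have hcos : √2 / 2 ≤ cos θ := by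
    rw [← cos_pi_div_four]
    exact cos_le_cos_of_nonneg_of_le_pi hθ.1 (by linarith [pi_pos]) hθ.2
  have h2 : √2 * √2 = 2 := mul_self_sqrt zero_le_two
  nlinarith [mul_le_mul_of_nonneg_left hcos (sqrt_nonneg 2)]

theorem sq_mul_lambdaDelta2 (ρ : ℝ → ℝ) {δ : ℝ} (hδ : δ ≠ 0) (κ : ℝ) :
    δ ^ 2 * lambdaDelta2 ρ δ κ
      = 4 * ∫ θ in (0:ℝ)..(π / 2), ∫ r in (0:ℝ)..1, r * ρ r * (1 - cos (r * (δ * κ * cos θ))) := by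
  have h4 : δ ^ 2 * (4 / δ ^ 2) = 4 := by field_simp
  rw [lambdaDelta2, ← mul_assoc, h4]
  simp only [mul_assoc]

theorem lambdaDelta2_bound_largerange_monotone_general (ρ : ℝ → ℝ)
    (hnonneg : ∀ r ∈ Set.Ioc (0:ℝ) 1, 0 ≤ ρ r)
    (hint1 : IntervalIntegrable (fun r => r * ρ r) volume 0 1)
    (rs : ℝ) (hrs : rs ∈ Set.Ioc (0:ℝ) 1)
    (hmono : MonotoneOn (fun r => r * ρ r) (Set.Ioc (0:ℝ) rs))
    (δ : ℝ) (k : ℤ × ℤ)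
    (hlarge : π ≤ rs * (δ * knorm2 k)) :
    π * min (∫ r in (rs / Real.sqrt 2)..rs, r * ρ r)
            (∫ r in (0:ℝ)..((3 / 7) * rs), r * ρ r)
      ≤ δ ^ 2 * lambdaDelta2 ρ δ (knorm2 k) := by
  set M := δ * knorm2 k
  have hM : 0 < M := pos_of_mul_pos_right (pi_pos.trans_le hlarge) hrs.1.le
  have hg0 : ∀ r ∈ Icc (0 : ℝ) 1, 0 ≤ r * ρ r := fun r hr => by
    rcases hr.1.eq_or_lt with rfl | hr0
    · simp
    · exact mul_nonneg hr0.le (hnonneg r ⟨hr0, hr.2⟩)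
  have hg : MonotoneOn (fun r => r * ρ r) (Icc 0 rs) := hmono.Icc_of_Ioc hrs.1.le
    fun r hr => by simpa using hg0 r ⟨hr.1.le, hr.2.trans hrs.2⟩
  have hpt : ∀ θ ∈ Icc 0 (π / 4), min (∫ r in (rs / √2)..rs, r * ρ r)
      (∫ r in (0:ℝ)..((3 / 7) * rs), r * ρ r)
        ≤ ∫ r in (0:ℝ)..1, r * ρ r * (1 - cos (r * (M * cos θ))) := fun θ hθ =>
    min_integral_le_integral_mul_one_sub_cos hrs hg0 hg hint1 <| calc
      π ≤ rs * M * 1 := by rwa [mul_one]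
      _ ≤ rs * M * (√2 * cos θ) :=
        mul_le_mul_of_nonneg_left (one_le_sqrt_two_mul_cos hθ) (mul_nonneg hrs.1.le hM.le)
      _ = √2 * (rs * (M * cos θ)) := by ring
  rw [sq_mul_lambdaDelta2 ρ (left_ne_zero_of_mul hM.ne')]
  calc π * min (∫ r in (rs / √2)..rs, r * ρ r) (∫ r in (0:ℝ)..((3 / 7) * rs), r * ρ r)
      = 4 * ((π / 4 - 0) * min (∫ r in (rs / √2)..rs, r * ρ r)
          (∫ r in (0:ℝ)..((3 / 7) * rs), r * ρ r)) := by ring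
    _ ≤ _ := by
      gcongr
      exact mul_le_integral_of_le_of_nonneg (by positivity) (by linarith [pi_pos])
        (((continuous_integral_mul_one_sub_cos hint1).comp (by fun_prop)).intervalIntegrable _ _)
        hpt fun θ _ => integral_nonneg zero_le_one fun r hr =>
          mul_nonneg (hg0 r hr) (sub_nonneg.2 (cos_le_one _))

theorem lambdaDelta2_bound_largerange_monotone (ρ : ℝ → ℝ) (hmeas : Measurable ρ)
    (hnonneg : ∀ r ∈ Set.Ioc (0:ℝ) 1, 0 ≤ ρ r)
    (hint3 : IntervalIntegrable (fun r => r ^ 3 * ρ r) volume 0 1)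
    (hint1 : IntervalIntegrable (fun r => r * ρ r) volume 0 1)
    (rs : ℝ) (hrs : rs ∈ Set.Ioc (0:ℝ) 1)
    (hmono : MonotoneOn (fun r => r * ρ r) (Set.Ioc (0:ℝ) rs))
    (δ : ℝ) (hδ : 0 < δ) (k : ℤ × ℤ) (hk : k ≠ 0)
    (hlarge : π ≤ rs * (δ * knorm2 k)) :
    π * min (∫ r in (rs / Real.sqrt 2)..rs, r * ρ r)
            (∫ r in (0:ℝ)..((3 / 7) * rs), r * ρ r)
      ≤ δ ^ 2 * lambdaDelta2 ρ δ (knorm2 k) :=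
  lambdaDelta2_bound_largerange_monotone_general ρ hnonneg hint1 rs hrs hmono δ k hlarge
end
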